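/- arXiv:2602.15717 — 12 statements merged into one kernel-verified Lean document; each statement's English description precedes it below -/
import Mathlib

section
/- Let p be an odd prime and let a, b be positive integers, and set g = gcd(a, b). If both a/g and b/g are odd, then gcd(p^a + 1, p^b + 1) = p^g + 1; otherwise, gcd(p^a + 1, p^b + 1) = 2. -/
private lemma pow_eq_neg_one_of_dvd (p g s d : ℕ) (h : d ∣ p ^ (g * s) + 1) :
    ((p : ZMod d) ^ g) ^ s = -1 := by
  have h0 : ((p ^ (g * s) + 1 : ℕ) : ZMod d) = 0 :=
    (ZMod.natCast_eq_zero_iff _ d).mpr h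
  push_cast at h0
  rw [← pow_mul]
  linear_combination h0

private lemma aux1 (p g s t d : ℕ) (hs : Odd s) (ht : Odd t) (hst : Nat.Coprime s t)
    (h1 : d ∣ p ^ (g * s) + 1) (h2 : d ∣ p ^ (g * t) + 1) : d ∣ p ^ g + 1 := by
  have e1 := pow_eq_neg_one_of_dvd p g s d h1
  have e2 := pow_eq_neg_one_of_dvd p g t d h2
  set y : ZMod d := -((p : ZMod d) ^ g) with hy
  have ys : y ^ s = 1 := by rw [hy, hs.neg_pow, e1, neg_neg]
  have yt : y ^ t = 1 := by rw [hy, ht.neg_pow, e2, neg_neg]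
  have hord : orderOf y ∣ Nat.gcd s t :=
    Nat.dvd_gcd (orderOf_dvd_of_pow_eq_one ys) (orderOf_dvd_of_pow_eq_one yt)
  rw [hst] at hord
  have hy1 : y = 1 := orderOf_eq_one_iff.mp (Nat.dvd_one.mp hord)
  have : ((p ^ g + 1 : ℕ) : ZMod d) = 0 := by
    push_cast
    linear_combination -hy1
  exact (ZMod.natCast_eq_zero_iff _ d).mp this

private lemma aux2 (p g s t d : ℕ) (hs : Even s) (ht : Odd t) (hst : Nat.Coprime s t)
    (h1 : d ∣ p ^ (g * s) + 1) (h2 : d ∣ p ^ (g * t) + 1) : d ∣ 2 := by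
  have e1 := pow_eq_neg_one_of_dvd p g s d h1
  have e2 := pow_eq_neg_one_of_dvd p g t d h2
  set y : ZMod d := -((p : ZMod d) ^ g) with hy
  have ys : y ^ s = -1 := by rw [hy, hs.neg_pow, e1]
  have ys2 : y ^ (2 * s) = 1 := by
    rw [mul_comm, pow_mul, ys]; ring
  have yt : y ^ t = 1 := by rw [hy, ht.neg_pow, e2, neg_neg]
  have hcop : Nat.Coprime (2 * s) t :=
    Nat.Coprime.mul ht.coprime_two_left hst
  have hord : orderOf y ∣ Nat.gcd (2 * s) t :=
    Nat.dvd_gcd (orderOf_dvd_of_pow_eq_one ys2) (orderOf_dvd_of_pow_eq_one yt)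
  rw [hcop] at hord
  have hy1 : y = 1 := orderOf_eq_one_iff.mp (Nat.dvd_one.mp hord)
  have : ((2 : ℕ) : ZMod d) = 0 := by
    have : (1 : ZMod d) = -1 := by rw [← ys, hy1, one_pow]
    push_cast
    linear_combination this
  exact (ZMod.natCast_eq_zero_iff _ d).mp this

private lemma aux3 (p g s : ℕ) (hs : Odd s) : p ^ g + 1 ∣ p ^ (g * s) + 1 := by
  have h0 : ((p ^ g + 1 : ℕ) : ZMod (p ^ g + 1)) = 0 := by
    exact_mod_cast ZMod.natCast_self _
  push_cast at h0
  have e : ((p : ZMod (p ^ g + 1)) ^ g) ^ s = -1 := by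
    have : (p : ZMod (p ^ g + 1)) ^ g = -1 := by linear_combination h0
    rw [this, hs.neg_one_pow]
  have : ((p ^ (g * s) + 1 : ℕ) : ZMod (p ^ g + 1)) = 0 := by
    push_cast
    rw [pow_mul, e]
    ring
  exact (ZMod.natCast_eq_zero_iff _ _).mp this

theorem stmt_3 (p a b : ℕ) (hp : p.Prime) (hodd : Odd p)
    (ha : 0 < a) (hb : 0 < b) :
    Nat.gcd (p ^ a + 1) (p ^ b + 1) =
      if Odd (a / Nat.gcd a b) ∧ Odd (b / Nat.gcd a b)
      then p ^ Nat.gcd a b + 1 else 2 := by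
  have hg0 : 0 < Nat.gcd a b := Nat.gcd_pos_of_pos_left _ ha
  set g := Nat.gcd a b with hg
  set s := a / g with hs'
  set t := b / g with ht'
  have hsa : g * s = a := Nat.mul_div_cancel' (Nat.gcd_dvd_left a b)
  have htb : g * t = b := Nat.mul_div_cancel' (Nat.gcd_dvd_right a b)
  have hst : Nat.Coprime s t := Nat.coprime_div_gcd_div_gcd hg0
  set d := Nat.gcd (p ^ a + 1) (p ^ b + 1) with hd
  have h1 : d ∣ p ^ (g * s) + 1 := hsa ▸ Nat.gcd_dvd_left _ _
  have h2 : d ∣ p ^ (g * t) + 1 := htb ▸ Nat.gcd_dvd_right _ _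
  have h2d : 2 ∣ d :=
    Nat.dvd_gcd (hodd.pow.add_one).two_dvd (hodd.pow.add_one).two_dvd
  split_ifs with h
  · obtain ⟨hs, ht⟩ := h
    refine Nat.dvd_antisymm (aux1 p g s t d hs ht hst h1 h2) (Nat.dvd_gcd ?_ ?_)
    · exact hsa ▸ aux3 p g s hs
    · exact htb ▸ aux3 p g t ht
  · rcases Nat.even_or_odd s with hs | hs
    · have ht : Odd t := by
        rcases Nat.even_or_odd t with h' | h'
        · exfalso
          have : (2 : ℕ) ∣ Nat.gcd s t := Nat.dvd_gcd hs.two_dvd h'.two_dvd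
          rw [hst] at this
          omega
        · exact h'
      exact Nat.dvd_antisymm (aux2 p g s t d hs ht hst h1 h2) h2d
    · have ht : Even t := by
        rcases Nat.even_or_odd t with h' | h'
        · exact h'
        · exact absurd ⟨hs, h'⟩ h
      exact Nat.dvd_antisymm (aux2 p g t s d ht hs hst.symm h2 h1) h2d
end

section
/- Let A, P be integers with 1 ≤ A ≤ P, and let D be a positive integer. If D·P + 1 divides A·P + 1 (in the integers), then D = A. -/
theorem stmt_4 (A P D : ℤ) (hA : 1 ≤ A) (hAP : A ≤ P) (hD : 0 < D)
    (hdvd : D * P + 1 ∣ A * P + 1) : D = A := by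
  have hP : 1 ≤ P := hA.trans hAP
  rcases lt_trichotomy D A with h | h | h
  · have h2 : D * P + 1 ∣ (A - D) * P := by
      have := dvd_sub hdvd (dvd_refl (D * P + 1))
      have heq : A * P + 1 - (D * P + 1) = (A - D) * P := by ring
      rwa [heq] at this
    have h3 : IsCoprime (D * P + 1) P := ⟨1, -D, by ring⟩
    have h4 : D * P + 1 ∣ A - D := h3.dvd_of_dvd_mul_right h2
    have h5 := Int.le_of_dvd (by linarith) h4
    nlinarith
  · exact h
  · have h5 := Int.le_of_dvd (by nlinarith) hdvd
    nlinarith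
end

section
/- Let p be an odd prime and let k, ℓ, r, t, m be natural numbers satisfying: 1 < ℓ < k, 0 < r < k, 2ℓ < k − r, ℓ divides k with k/ℓ even, t divides p − 1, m divides (p^k + 1)(p − 1), m > 1, and m·(p^ℓ·t + 1) = t·(p^(k−r) + 1). Then t divides m and the quotient u = m/t satisfies u ≥ 5. -/
theorem stmt_5 (p k ℓ r t m : ℕ) (hp : p.Prime) (hodd : Odd p)
    (hℓ : 1 < ℓ) (hℓk : ℓ < k) (hr : 0 < r) (hrk : r < k)
    (h2ℓ : 2 * ℓ < k - r) (hdvd : ℓ ∣ k) (heven : Even (k / ℓ))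
    (ht : t ∣ p - 1) (hm : m ∣ (p ^ k + 1) * (p - 1)) (hm1 : 1 < m)
    (heq : m * (p ^ ℓ * t + 1) = t * (p ^ (k - r) + 1)) :
    t ∣ m ∧ 5 ≤ m / t := by
  have hp3 : 3 ≤ p := by
    have h2 := hp.two_le
    rcases hodd with ⟨j, hj⟩
    omega
  have ht0 : 0 < t := by
    rcases Nat.eq_zero_or_pos t with h | h
    · subst h; simp at ht; omega
    · exact h
  have htp : t + 1 ≤ p := by
    have := Nat.le_of_dvd (by omega) ht
    omega
  -- t ∣ m
  have htm : t ∣ m := by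
    have h1 : t ∣ m * (p ^ ℓ * t + 1) := heq ▸ Dvd.intro _ rfl
    have h2 : m * (p ^ ℓ * t + 1) = t * (m * p ^ ℓ) + m := by ring
    rw [h2] at h1
    exact (Nat.dvd_add_right ⟨m * p ^ ℓ, by ring⟩).mp h1
  obtain ⟨u, hu⟩ := htm
  subst hu
  refine ⟨Dvd.intro _ rfl, ?_⟩
  rw [Nat.mul_div_cancel_left _ ht0]
  have heq' : u * (p ^ ℓ * t + 1) = p ^ (k - r) + 1 := by
    have := heq
    have h3 : t * (u * (p ^ ℓ * t + 1)) = t * (p ^ (k - r) + 1) := by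
      rw [← heq]; ring
    exact Nat.eq_of_mul_eq_mul_left ht0 h3
  have hA : 9 ≤ p ^ ℓ := by
    calc (9 : ℕ) = 3 ^ 2 := by norm_num
    _ ≤ p ^ 2 := Nat.pow_le_pow_left hp3 2
    _ ≤ p ^ ℓ := Nat.pow_le_pow_right (by omega) (by omega)
  have hB : p ^ ℓ * p ^ ℓ * p ≤ p ^ (k - r) := by
    calc p ^ ℓ * p ^ ℓ * p = p ^ (ℓ + ℓ + 1) := by ring
    _ ≤ p ^ (k - r) := Nat.pow_le_pow_right (by omega) (by omega)
  by_contra hcon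
  push_neg at hcon
  have hu4 : u ≤ 4 := by omega
  have h4 : u * (p ^ ℓ * t + 1) ≤ 4 * (p ^ ℓ * t + 1) := Nat.mul_le_mul_right _ hu4
  have h5 : p ^ ℓ * (t + 1) ≤ p ^ ℓ * p := Nat.mul_le_mul_left _ htp
  have h6 : 9 * (p ^ ℓ * p) ≤ p ^ ℓ * (p ^ ℓ * p) := Nat.mul_le_mul_right _ hA
  nlinarith [heq', hB, h4, h5, h6]
end

section
/- Let p be an odd prime and let k, ℓ, r, t, m be natural numbers satisfying: 1 < ℓ < k, 0 < r < k, 2ℓ < k − r, ℓ divides k with k/ℓ even, t divides p − 1, m divides (p^k + 1)(p − 1), m > 1, and m·(p^ℓ·t + 1) = t·(p^(k−r) + 1). Then t divides m, and writing u = m/t and u = 2^e·u₀ with u₀ odd (i.e. u₀ is the odd part of u), u₀ divides both p^(k−r) + 1 and p^k + 1. -/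
theorem stmt_6 (p k ℓ r t m : ℕ) (hp : p.Prime) (hodd : Odd p)
    (hℓ : 1 < ℓ) (hℓk : ℓ < k) (hr : 0 < r) (hrk : r < k)
    (h2ℓ : 2 * ℓ < k - r) (hdvd : ℓ ∣ k) (heven : Even (k / ℓ))
    (ht : t ∣ p - 1) (hm : m ∣ (p ^ k + 1) * (p - 1)) (hm1 : 1 < m)
    (heq : m * (p ^ ℓ * t + 1) = t * (p ^ (k - r) + 1)) :
    t ∣ m ∧ ∀ e u₀ : ℕ, Odd u₀ → m / t = 2 ^ e * u₀ →
      u₀ ∣ p ^ (k - r) + 1 ∧ u₀ ∣ p ^ k + 1 := by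
  have hp2 : 2 ≤ p := hp.two_le
  have htpos : 0 < t := by
    rcases Nat.eq_zero_or_pos t with h | h
    · subst h
      simp at ht
      omega
    · exact h
  have hcop : Nat.Coprime t (p ^ ℓ * t + 1) := by
    have : Nat.Coprime t (1 + p ^ ℓ * t) :=
      (Nat.coprime_add_mul_right_right t 1 (p ^ ℓ)).mpr (Nat.coprime_one_right t)
    simpa [Nat.add_comm] using this
    
  have htm : t ∣ m := by
    have h1 : t ∣ m * (p ^ ℓ * t + 1) := heq ▸ Dvd.intro _ rfl
    exact hcop.dvd_of_dvd_mul_right h1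
  refine ⟨htm, ?_⟩
  obtain ⟨u, hu⟩ := htm
  have hudiv : m / t = u := by rw [hu, Nat.mul_div_cancel_left _ htpos]
  have hueq : u * (p ^ ℓ * t + 1) = p ^ (k - r) + 1 := by
    have : t * (u * (p ^ ℓ * t + 1)) = t * (p ^ (k - r) + 1) := by
      rw [← heq, hu]; ring
    exact Nat.eq_of_mul_eq_mul_left htpos this
  intro e u₀ hodd₀ heu
  have hu₀u : u₀ ∣ u := ⟨2 ^ e, by rw [← hudiv, heu]; ring⟩
  have h1 : u₀ ∣ p ^ (k - r) + 1 := hu₀u.trans ⟨_, hueq.symm⟩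
  refine ⟨h1, ?_⟩
  -- gcd(u₀, p-1) divides 2 and is odd, so it's 1
  have hcop2 : Nat.Coprime u₀ (p - 1) := by
    have hd2 : Nat.gcd u₀ (p - 1) ∣ 2 := by
      have hdp : Nat.gcd u₀ (p - 1) ∣ p ^ (k - r) + 1 :=
        (Nat.gcd_dvd_left _ _).trans h1
      have hdm : Nat.gcd u₀ (p - 1) ∣ p ^ (k - r) - 1 := by
        have := Nat.sub_dvd_pow_sub_pow p 1 (k - r)
        simpa using (Nat.gcd_dvd_right u₀ (p - 1)).trans this
      have hsub := Nat.dvd_sub hdp hdm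
      have hpn : 1 ≤ p ^ (k - r) := Nat.one_le_pow _ _ (by omega)
      have : p ^ (k - r) + 1 - (p ^ (k - r) - 1) = 2 := by omega
      rwa [this] at hsub
    have hoddg : Odd (Nat.gcd u₀ (p - 1)) := hodd₀.of_dvd_nat (Nat.gcd_dvd_left _ _)
    rcases (Nat.dvd_prime Nat.prime_two).mp hd2 with h | h
    · exact h
    · rw [h] at hoddg; simp [Nat.odd_iff] at hoddg
  -- u₀ ∣ m ∣ (p^k+1)(p-1)
  have hu₀m : u₀ ∣ m := hu.symm ▸ hu₀u.mul_left t
  exact hcop2.dvd_of_dvd_mul_right (hu₀m.trans hm)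
end

section
/- Let p be an odd prime and let k, ℓ, r, t, m be natural numbers satisfying: 1 < ℓ < k, 0 < r < k, 2ℓ < k − r, ℓ divides k with k/ℓ even, t divides p − 1, m divides (p^k + 1)(p − 1), m > 1, and m·(p^ℓ·t + 1) = t·(p^(k−r) + 1). Then t divides m, and the odd part u₀ of u = m/t divides p^r − 1. -/
theorem stmt_7 (p k ℓ r t m : ℕ) (hp : p.Prime) (hodd : Odd p)
    (hℓ : 1 < ℓ) (hℓk : ℓ < k) (hr : 0 < r) (hrk : r < k)
    (h2ℓ : 2 * ℓ < k - r) (hdvd : ℓ ∣ k) (heven : Even (k / ℓ))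
    (ht : t ∣ p - 1) (hm : m ∣ (p ^ k + 1) * (p - 1)) (hm1 : 1 < m)
    (heq : m * (p ^ ℓ * t + 1) = t * (p ^ (k - r) + 1)) :
    t ∣ m ∧ ∀ e u₀ : ℕ, Odd u₀ → m / t = 2 ^ e * u₀ →
      u₀ ∣ p ^ r - 1 := by
  have ht0 : 0 < t := by
    rcases Nat.eq_zero_or_pos t with h | h
    · subst h; simp at heq; omega
    · exact h
  have hcop : Nat.Coprime t (p ^ ℓ * t + 1) := by
    have h1 : p ^ ℓ * t + 1 = 1 + p ^ ℓ * t := by ring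
    show Nat.gcd t (p ^ ℓ * t + 1) = 1
    rw [h1, Nat.gcd_add_mul_right_right, Nat.gcd_one_right]
  have htm : t ∣ m := by
    have h1 : t ∣ m * (p ^ ℓ * t + 1) := heq ▸ Dvd.intro _ rfl
    exact Nat.Coprime.dvd_of_dvd_mul_right hcop h1
  refine ⟨htm, ?_⟩
  intro e u₀ hoddu hu
  obtain ⟨u, hmu⟩ := htm
  have huu : m / t = u := by rw [hmu, Nat.mul_div_cancel_left _ ht0]
  rw [huu] at hu
  have heq' : u * (p ^ ℓ * t + 1) = p ^ (k - r) + 1 := by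
    apply Nat.eq_of_mul_eq_mul_left ht0
    calc t * (u * (p ^ ℓ * t + 1)) = (t * u) * (p ^ ℓ * t + 1) := by ring
      _ = t * (p ^ (k - r) + 1) := by rw [← hmu]; exact heq
  have hu0u : u₀ ∣ u := hu ▸ Dvd.intro_left _ rfl
  have hu0kr : u₀ ∣ p ^ (k - r) + 1 :=
    heq' ▸ (hu0u.trans (Dvd.intro _ rfl))
  have hu0m : u₀ ∣ m := hmu ▸ (hu0u.mul_left t)
  have hu0prod : u₀ ∣ (p ^ k + 1) * (p - 1) := hu0m.trans hm
  have hcop2 : Nat.Coprime u₀ (p - 1) := by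
    have h1 : Nat.gcd u₀ (p - 1) ∣ p ^ (k - r) + 1 :=
      (Nat.gcd_dvd_left _ _).trans hu0kr
    have h2 : Nat.gcd u₀ (p - 1) ∣ p ^ (k - r) - 1 := by
      refine (Nat.gcd_dvd_right _ _).trans ?_
      have := Nat.sub_dvd_pow_sub_pow p 1 (k - r)
      simpa using this
    have h3 := Nat.dvd_sub h1 h2
    have hpk : 1 ≤ p ^ (k - r) := Nat.one_le_pow _ _ hp.pos
    have h4 : p ^ (k - r) + 1 - (p ^ (k - r) - 1) = 2 := by omega
    rw [h4] at h3
    rcases (Nat.dvd_prime Nat.prime_two).mp h3 with h | h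
    · exact h
    · exfalso
      have : 2 ∣ u₀ := h ▸ Nat.gcd_dvd_left _ _
      exact (Nat.not_even_iff_odd.mpr hoddu) ((even_iff_two_dvd).mpr this)
  have hu0k : u₀ ∣ p ^ k + 1 := hcop2.dvd_of_dvd_mul_right hu0prod
  have h5 : u₀ ∣ p ^ k + p ^ r := by
    have h6 : (p ^ (k - r) + 1) * p ^ r = p ^ k + p ^ r := by
      rw [add_mul, one_mul, ← pow_add]
      congr 2
      omega
    exact h6 ▸ hu0kr.mul_right _
  have h7 := Nat.dvd_sub h5 hu0k
  have hpr : 1 ≤ p ^ r := Nat.one_le_pow _ _ hp.pos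
  have h8 : p ^ k + p ^ r - (p ^ k + 1) = p ^ r - 1 := by omega
  rwa [h8] at h7
end

section
/- Let p be an odd prime and let k, ℓ, r, t, m be natural numbers satisfying: 1 < ℓ < k, 0 < r < k, 2ℓ < k − r, ℓ divides k with k/ℓ even, t divides p − 1, m divides (p^k + 1)(p − 1), m > 1, and m·(p^ℓ·t + 1) = t·(p^(k−r) + 1). Then t divides m, and the odd part u₀ of u = m/t satisfies gcd(u₀, t) = 1. -/
theorem stmt_8 (p k ℓ r t m : ℕ) (hp : p.Prime) (hodd : Odd p)
    (hℓ : 1 < ℓ) (hℓk : ℓ < k) (hr : 0 < r) (hrk : r < k)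
    (h2ℓ : 2 * ℓ < k - r) (hdvd : ℓ ∣ k) (heven : Even (k / ℓ))
    (ht : t ∣ p - 1) (hm : m ∣ (p ^ k + 1) * (p - 1)) (hm1 : 1 < m)
    (heq : m * (p ^ ℓ * t + 1) = t * (p ^ (k - r) + 1)) :
    t ∣ m ∧ ∀ e u₀ : ℕ, Odd u₀ → m / t = 2 ^ e * u₀ →
      Nat.gcd u₀ t = 1 := by
  have hp3 : 3 ≤ p := by
    have := hp.two_le
    rcases hodd with ⟨c, hc⟩
    omega
  have htpos : 0 < t := Nat.pos_of_dvd_of_pos ht (by omega)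
  have hcop : Nat.Coprime t (p ^ ℓ * t + 1) := by
    have h : p ^ ℓ * t + 1 = 1 + p ^ ℓ * t := by ring
    rw [h]
    exact (Nat.coprime_add_mul_right_right t 1 (p ^ ℓ)).mpr (Nat.coprime_one_right t)
  have htm : t ∣ m := by
    have h : t ∣ m * (p ^ ℓ * t + 1) := heq ▸ Dvd.intro _ rfl
    exact hcop.dvd_of_dvd_mul_right h
  refine ⟨htm, fun e u₀ hu₀ hmt => ?_⟩
  obtain ⟨u, hu⟩ := htm
  have humt : m / t = u := by rw [hu, Nat.mul_div_cancel_left u htpos]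
  have huY : u * (p ^ ℓ * t + 1) = p ^ (k - r) + 1 := by
    have h : t * (u * (p ^ ℓ * t + 1)) = t * (p ^ (k - r) + 1) := by
      rw [← heq, hu]; ring
    exact Nat.eq_of_mul_eq_mul_left htpos h
  have hudvd : u ∣ p ^ (k - r) + 1 := ⟨_, huY.symm⟩
  have hu₀u : u₀ ∣ u := by rw [humt] at hmt; exact ⟨2 ^ e, by rw [hmt]; ring⟩
  set d := Nat.gcd u₀ t with hd
  have hd1 : d ∣ p - 1 := (Nat.gcd_dvd_right u₀ t).trans ht
  have hd2 : d ∣ p ^ (k - r) + 1 := ((Nat.gcd_dvd_left u₀ t).trans hu₀u).trans hudvd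
  have hd3 : d ∣ p ^ (k - r) - 1 := hd1.trans (by
    have := Nat.sub_dvd_pow_sub_pow p 1 (k - r)
    simpa using this)
  have hpow : 1 ≤ p ^ (k - r) := Nat.one_le_pow _ _ (by omega)
  have hd4 : d ∣ 2 := by
    have h := Nat.dvd_sub hd2 hd3
    have h2 : p ^ (k - r) + 1 - (p ^ (k - r) - 1) = 2 := by omega
    rwa [h2] at h
  rcases (Nat.prime_two.eq_one_or_self_of_dvd d hd4) with h1 | h2
  · exact h1
  · exfalso
    have : (2 : ℕ) ∣ u₀ := h2 ▸ Nat.gcd_dvd_left u₀ t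
    rw [Nat.odd_iff] at hu₀
    omega
end

section
/- Let p be an odd prime and let k, ℓ, r, t, m be natural numbers satisfying: 1 < ℓ < k, 0 < r < k, 2ℓ < k − r, ℓ divides k with k/ℓ even, t divides p − 1, m divides (p^k + 1)(p − 1), m > 1, and m·(p^ℓ·t + 1) = t·(p^(k−r) + 1). Then t divides m and u = m/t satisfies u² ≥ p^(k−r) (i.e. u ≥ p^((k−r)/2)). -/
theorem stmt_9 (p k ℓ r t m : ℕ) (hp : p.Prime) (hodd : Odd p)
    (hℓ : 1 < ℓ) (hℓk : ℓ < k) (hr : 0 < r) (hrk : r < k)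
    (h2ℓ : 2 * ℓ < k - r) (hdvd : ℓ ∣ k) (heven : Even (k / ℓ))
    (ht : t ∣ p - 1) (hm : m ∣ (p ^ k + 1) * (p - 1)) (hm1 : 1 < m)
    (heq : m * (p ^ ℓ * t + 1) = t * (p ^ (k - r) + 1)) :
    t ∣ m ∧ p ^ (k - r) ≤ (m / t) ^ 2 := by
  set n := k - r with hn
  have hp2 : 2 ≤ p := hp.two_le
  have hpne2 : p ≠ 2 := by rintro rfl; exact (Nat.not_odd_iff_even.mpr even_two) hodd
  have hp3 : 3 ≤ p := by omega
  have ht0 : 0 < t := Nat.pos_of_dvd_of_pos ht (by omega)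
  have htle : t ≤ p - 1 := Nat.le_of_dvd (by omega) ht
  have hcop : Nat.Coprime t (p ^ ℓ * t + 1) := by
    have h := Nat.gcd_add_mul_right_right t 1 (p ^ ℓ)
    simpa [Nat.Coprime, Nat.add_comm] using h
  have htm : t ∣ m := hcop.dvd_of_dvd_mul_right ⟨p ^ n + 1, heq⟩
  obtain ⟨u, hmu⟩ := htm
  have hut : m / t = u := by rw [hmu, Nat.mul_div_cancel_left _ ht0]
  have hu : u * (p ^ ℓ * t + 1) = p ^ n + 1 := by
    apply Nat.eq_of_mul_eq_mul_left ht0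
    calc t * (u * (p ^ ℓ * t + 1)) = (t * u) * (p ^ ℓ * t + 1) := by ring
    _ = t * (p ^ n + 1) := by rw [← hmu]; exact heq
  have hu0 : 0 < u := by
    rcases Nat.eq_zero_or_pos u with h | h
    · subst h; simp at hu
    · exact h
  refine ⟨⟨u, hmu⟩, ?_⟩
  rw [hut]
  have hA1 : 1 ≤ p ^ ℓ := Nat.one_le_pow _ _ (by omega)
  have hA : p ^ ℓ * t + 1 ≤ p ^ (ℓ + 1) := by
    have h1 : p ^ ℓ * t ≤ p ^ ℓ * (p - 1) := Nat.mul_le_mul_left _ htle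
    have h2 : p ^ ℓ * (p - 1) + p ^ ℓ = p ^ ℓ * p := by
      rw [← Nat.mul_succ]; congr 1; omega
    have h3 : p ^ (ℓ + 1) = p ^ ℓ * p := pow_succ p ℓ
    linarith
  by_cases hcase : 2 * ℓ + 2 ≤ n
  · -- easy case
    have h3 : p ^ (n - ℓ - 1) * p ^ (ℓ + 1) < u * p ^ (ℓ + 1) := by
      calc p ^ (n - ℓ - 1) * p ^ (ℓ + 1) = p ^ n := by
            rw [← pow_add]; congr 1; omega
        _ < p ^ n + 1 := Nat.lt_succ_self _
        _ = u * (p ^ ℓ * t + 1) := hu.symm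
        _ ≤ u * p ^ (ℓ + 1) := Nat.mul_le_mul_left _ hA
    have hu1 : p ^ (n - ℓ - 1) < u := Nat.lt_of_mul_lt_mul_right h3
    calc p ^ n ≤ p ^ ((n - ℓ - 1) * 2) := Nat.pow_le_pow_right (by omega) (by omega)
      _ = (p ^ (n - ℓ - 1)) ^ 2 := by rw [pow_mul]
      _ ≤ u ^ 2 := Nat.pow_le_pow_left hu1.le 2
  · -- borderline case n = 2ℓ+1 : contradiction
    exfalso
    have hn2 : n = 2 * ℓ + 1 := by omega
    have hu2 : 2 ≤ u := by
      rcases Nat.lt_or_ge u 2 with h | h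
      · interval_cases u
        exfalso
        rw [one_mul] at hu
        have h1 : p ^ ℓ * t = p ^ n := Nat.add_right_cancel hu
        have h1' : p ^ ℓ * t = p ^ ℓ * p ^ (n - ℓ) := by
          rw [h1, ← pow_add]; congr 1; omega
        have h2 : t = p ^ (n - ℓ) := Nat.eq_of_mul_eq_mul_left (by omega) h1'
        have h3 : p ≤ p ^ (n - ℓ) := by
          calc p = p ^ 1 := (pow_one p).symm
            _ ≤ p ^ (n - ℓ) := Nat.pow_le_pow_right (by omega) (by omega)
        rw [← h2] at h3
        omega
      · exact h
    have hd : p ^ ℓ ∣ u - 1 := by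
      have h1 : u * (p ^ ℓ * t) + u = p ^ n + 1 := by rw [← hu]; ring
      have h2 : u - 1 = p ^ n - u * (p ^ ℓ * t) := by
        generalize u * (p ^ ℓ * t) = X at h1 ⊢
        generalize p ^ n = P at h1 ⊢
        omega
      rw [h2]
      exact Nat.dvd_sub (pow_dvd_pow p (by omega)) ⟨u * t, by ring⟩
    obtain ⟨a, ha⟩ := hd
    have hua : u = p ^ ℓ * a + 1 := by
      rw [← ha]; omega
    have ha1 : 1 ≤ a := by
      rcases Nat.eq_zero_or_pos a with h | h
      · rw [h, Nat.mul_zero] at ha; omega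
      · exact h
    rw [hua, hn2] at hu
    have huZ : ((p:ℤ) ^ ℓ * a + 1) * ((p:ℤ) ^ ℓ * t + 1) = (p:ℤ) ^ (2 * ℓ + 1) + 1 := by
      exact_mod_cast hu
    have hpl0 : ((p:ℤ)) ^ ℓ ≠ 0 := by positivity
    have key : (a:ℤ) * t * p ^ ℓ + ((a:ℤ) + t) = (p:ℤ) ^ (ℓ + 1) := by
      apply mul_left_cancel₀ hpl0
      linear_combination huZ
    have hdvd2 : ((p:ℤ)) ^ ℓ ∣ (a:ℤ) + t := ⟨(p:ℤ) - a * t, by linear_combination key⟩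
    have hpos : (0:ℤ) < (a:ℤ) + t := by
      have : (1:ℤ) ≤ a := by exact_mod_cast ha1
      have : (1:ℤ) ≤ t := by exact_mod_cast ht0
      linarith
    have hge : ((p:ℤ)) ^ ℓ ≤ (a:ℤ) + t := Int.le_of_dvd hpos hdvd2
    have hat : (a:ℤ) * t < p := by
      have h5 : (a:ℤ) * t * p ^ ℓ < p * p ^ ℓ := by
        have : (p:ℤ) ^ (ℓ + 1) = p * p ^ ℓ := by ring
        linarith
      exact lt_of_mul_lt_mul_right h5 (by positivity)
    have haZ : (1:ℤ) ≤ a := by exact_mod_cast ha1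
    have htZ : (1:ℤ) ≤ t := by exact_mod_cast ht0
    have hpZ : (3:ℤ) ≤ p := by exact_mod_cast hp3
    have hple : (p:ℤ) ^ 2 ≤ (p:ℤ) ^ ℓ := pow_le_pow_right₀ (by linarith) (by omega)
    nlinarith [mul_nonneg (sub_nonneg.mpr haZ) (sub_nonneg.mpr htZ)]
end

section
/- Let p be an odd prime and let k, ℓ, r, t, m be natural numbers satisfying: 1 < ℓ < k, 0 < r < k, 2ℓ < k − r, ℓ divides k with k/ℓ even, t divides p − 1, m divides (p^k + 1)(p − 1), m > 1, and gcd(p^(k−r) + 1, p^k + 1) = 2. Then m·(p^ℓ·t + 1) ≠ t·(p^(k−r) + 1). -/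
theorem stmt_10 (p k ℓ r t m : ℕ) (hp : p.Prime) (hodd : Odd p)
    (hℓ : 1 < ℓ) (hℓk : ℓ < k) (hr : 0 < r) (hrk : r < k)
    (h2ℓ : 2 * ℓ < k - r) (hdvd : ℓ ∣ k) (heven : Even (k / ℓ))
    (ht : t ∣ p - 1) (hm : m ∣ (p ^ k + 1) * (p - 1)) (hm1 : 1 < m)
    (hgcd : Nat.gcd (p ^ (k - r) + 1) (p ^ k + 1) = 2) :
    m * (p ^ ℓ * t + 1) ≠ t * (p ^ (k - r) + 1) := by
  intro heq
  obtain ⟨w, hw⟩ := hodd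
  have hp2 := hp.two_le
  have hp3 : 3 ≤ p := by omega
  have ht1 : 1 ≤ t := Nat.pos_of_dvd_of_pos ht (by omega)
  have hcop : Nat.Coprime t (p ^ ℓ * t + 1) := by
    have he : p ^ ℓ * t + 1 = 1 + p ^ ℓ * t := by ring
    rw [Nat.Coprime, he, Nat.gcd_add_mul_right_right t 1 (p ^ ℓ), Nat.gcd_one_right]
  have htm : t ∣ m := by
    have hd : t ∣ m * (p ^ ℓ * t + 1) := heq ▸ Dvd.intro _ rfl
    exact Nat.Coprime.dvd_of_dvd_mul_right hcop hd
  obtain ⟨s, hs⟩ := htm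
  have hseq : s * (p ^ ℓ * t + 1) = p ^ (k - r) + 1 := by
    have h : t * (s * (p ^ ℓ * t + 1)) = t * (p ^ (k - r) + 1) := by
      rw [← heq, hs]; ring
    exact Nat.eq_of_mul_eq_mul_left (by omega) h
  have hppos : 0 < p ^ ℓ := pow_pos (by omega) ℓ
  have hspos : 0 < s := by
    rcases Nat.eq_zero_or_pos s with h | h
    · rw [h, zero_mul] at hseq; omega
    · exact h
  have htle : t ≤ p - 1 := Nat.le_of_dvd (by omega) ht
  have hs1 : s ≠ 1 := by
    intro h1
    rw [h1, one_mul] at hseq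
    have h2 : p ^ ℓ * t = p ^ (k - r) := by omega
    have hexp : p ^ (k - r) = p ^ ℓ * p ^ (k - r - ℓ) := by
      rw [← pow_add]; congr 1; omega
    rw [hexp] at h2
    have htval : t = p ^ (k - r - ℓ) := Nat.eq_of_mul_eq_mul_left hppos h2
    have hle : p ≤ p ^ (k - r - ℓ) := Nat.le_self_pow (by omega) p
    omega
  -- s ≡ 1 mod p^ℓ, hence s ≥ p^ℓ + 1
  have hA : s * (p ^ ℓ * t) + s = p ^ (k - r) + 1 := by rw [← hseq]; ring
  have hd1 : p ^ ℓ ∣ p ^ (k - r) := pow_dvd_pow p (by omega)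
  have hd2 : p ^ ℓ ∣ s * (p ^ ℓ * t) := ⟨s * t, by ring⟩
  have hdvds1 : p ^ ℓ ∣ s - 1 := by
    have h := Nat.dvd_sub hd1 hd2
    have he : s - 1 = p ^ (k - r) - s * (p ^ ℓ * t) := by omega
    rwa [he]
  have hsge : p ^ ℓ + 1 ≤ s := by
    have h := Nat.le_of_dvd (by omega) hdvds1
    omega
  -- bound s above
  have hsm : s ∣ (p ^ k + 1) * (p - 1) := dvd_trans ⟨t, by rw [hs]; ring⟩ hm
  have hskr : s ∣ p ^ (k - r) + 1 := ⟨p ^ ℓ * t + 1, hseq.symm⟩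
  set d := Nat.gcd s (p ^ k + 1) with hdd
  have hd2' : d ∣ 2 := by
    rw [← hgcd]
    exact Nat.dvd_gcd ((Nat.gcd_dvd_left _ _).trans hskr) (Nat.gcd_dvd_right _ _)
  have hdpos : 0 < d := Nat.gcd_pos_of_pos_left _ hspos
  have hcop2 : Nat.Coprime (s / d) ((p ^ k + 1) / d) := Nat.coprime_div_gcd_div_gcd hdpos
  have hds : d * (s / d) = s := Nat.mul_div_cancel' (Nat.gcd_dvd_left _ _)
  have hda : d * ((p ^ k + 1) / d) = p ^ k + 1 := Nat.mul_div_cancel' (Nat.gcd_dvd_right _ _)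
  have hdiv : s / d ∣ ((p ^ k + 1) / d) * (p - 1) := by
    apply (Nat.mul_dvd_mul_iff_left hdpos).mp
    calc d * (s / d) = s := hds
      _ ∣ (p ^ k + 1) * (p - 1) := hsm
      _ = d * (((p ^ k + 1) / d) * (p - 1)) := by conv_lhs => rw [← hda, mul_assoc]
  have hsdp : s / d ∣ p - 1 := hcop2.dvd_of_dvd_mul_left hdiv
  have hsdle : s / d ≤ p - 1 := Nat.le_of_dvd (by omega) hsdp
  have hdle : d ≤ 2 := Nat.le_of_dvd (by omega) hd2'
  have hsle : s ≤ 2 * (p - 1) := by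
    calc s = d * (s / d) := hds.symm
      _ ≤ 2 * (p - 1) := Nat.mul_le_mul hdle hsdle
  -- contradiction
  have h1 : p ^ 2 ≤ p ^ ℓ := Nat.pow_le_pow_right (by omega) hℓ
  have h2 : 3 * p ≤ p ^ 2 := by nlinarith
  omega
end

section
/- Let p be an odd prime and let k, ℓ, r, t, m be natural numbers satisfying: 1 < ℓ < k, 0 < r < k, 2ℓ < k − r ≤ ℓ², ℓ divides k with k/ℓ even, t divides p − 1, m divides (p^k + 1)(p − 1), and m > 1. Then m·(p^ℓ·t + 1) ≠ t·(p^(k−r) + 1). -/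
theorem aux_val2 (e n : ℕ) (hn : n ≠ 0) (h1 : e ∣ 2*n) (h2 : ¬ e ∣ n) :
    padicValNat 2 e = padicValNat 2 n + 1 := by
  haveI : Fact (Nat.Prime 2) := ⟨Nat.prime_two⟩
  obtain ⟨s, hs⟩ := h1
  have he0 : e ≠ 0 := by rintro rfl; simp at hs; omega
  have hs0 : s ≠ 0 := by rintro rfl; simp at hs; omega
  have hsodd : ¬ 2 ∣ s := by
    rintro ⟨s', rfl⟩
    have h5 : 2 * n = 2 * (e * s') := by rw [hs]; ring
    exact h2 ⟨s', by omega⟩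
  have h3 : padicValNat 2 (e * s) = padicValNat 2 e + padicValNat 2 s :=
    padicValNat.mul he0 hs0
  have h4 : padicValNat 2 (2 * n) = padicValNat 2 2 + padicValNat 2 n :=
    padicValNat.mul (by norm_num) hn
  rw [hs, h3, padicValNat.eq_zero_of_not_dvd hsodd] at h4
  rw [padicValNat.self (by norm_num)] at h4
  omega

set_option maxHeartbeats 2000000 in
theorem stmt_11 (p k ℓ r t m : ℕ) (hp : p.Prime) (hodd : Odd p)
    (hℓ : 1 < ℓ) (hℓk : ℓ < k) (hr : 0 < r) (hrk : r < k)
    (h2ℓ : 2 * ℓ < k - r) (hkr : k - r ≤ ℓ ^ 2)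
    (hdvd : ℓ ∣ k) (heven : Even (k / ℓ))
    (ht : t ∣ p - 1) (hm : m ∣ (p ^ k + 1) * (p - 1)) (hm1 : 1 < m) :
    m * (p ^ ℓ * t + 1) ≠ t * (p ^ (k - r) + 1) := by
  intro h
  have hp2 : 2 ≤ p := hp.two_le
  have hpne2 : p ≠ 2 := by rintro rfl; exact absurd hodd (by decide)
  have hp3 : 3 ≤ p := by omega
  have ht1 : 1 ≤ t := Nat.pos_of_dvd_of_pos ht (by omega)
  have ht_le : t ≤ p - 1 := Nat.le_of_dvd (by omega) ht
  set K := k - r with hKdef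
  -- Step B : t ∣ m
  have hcop : Nat.Coprime t (p ^ ℓ * t + 1) := by
    have h1 : Nat.Coprime t (1 + t * p ^ ℓ) :=
      (Nat.coprime_add_mul_left_right t 1 (p ^ ℓ)).mpr (Nat.coprime_one_right t)
    have h2 : p ^ ℓ * t + 1 = 1 + t * p ^ ℓ := by ring
    rw [h2]; exact h1
  have htm : t ∣ m :=
    hcop.dvd_of_dvd_mul_right (by rw [h]; exact dvd_mul_right t _)
  obtain ⟨m', rfl⟩ := htm
  have hm'N : m' * (p ^ ℓ * t + 1) = p ^ K + 1 := by
    apply Nat.eq_of_mul_eq_mul_left (show 0 < t by omega)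
    rw [← mul_assoc]; exact h
  have hm'0 : m' ≠ 0 := by
    rintro rfl
    rw [zero_mul] at hm'N
    have : 1 ≤ p ^ K := Nat.one_le_pow _ _ (by omega)
    omega
  -- Step C
  set a := K / ℓ with hadef
  set b := K % ℓ with hbdef
  have hab : ℓ * a + b = K := Nat.div_add_mod K ℓ
  have hb : b < ℓ := Nat.mod_lt _ (by omega)
  have ha2 : 2 ≤ a := by
    rw [hadef, Nat.le_div_iff_mul_le (by omega : 0 < ℓ)]; omega
  have haℓ : a ≤ ℓ := by
    have h1 : ℓ * a ≤ ℓ * ℓ := by nlinarith [hab, hkr, sq ℓ]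
    exact Nat.le_of_mul_le_mul_left h1 (by omega)
  -- bound
  have hbound : t ^ a + p ^ b ≤ p ^ ℓ := by
    have e1 : t ^ (a - 1) ≤ (p - 1) ^ (a - 1) := Nat.pow_le_pow_left ht_le _
    have e2 : (p - 1) ^ (a - 1) ≤ (p - 1) ^ (ℓ - 1) :=
      Nat.pow_le_pow_right (by omega) (by omega)
    have e3 : (p - 1) ^ (ℓ - 1) ≤ p ^ (ℓ - 1) := Nat.pow_le_pow_left (by omega) _
    have e4 : t ^ a = t * t ^ (a - 1) := by
      rw [← pow_succ']; congr 1; omega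
    have e5 : p ^ b ≤ p ^ (ℓ - 1) := Nat.pow_le_pow_right (by omega) (by omega)
    have e7 : p * p ^ (ℓ - 1) = p ^ ℓ := by rw [← pow_succ']; congr 1; omega
    have e8 : t ^ (a-1) ≤ p ^ (ℓ-1) := le_trans e1 (le_trans e2 e3)
    have e6 : t * p ^ (ℓ - 1) + p ^ (ℓ - 1) ≤ p * p ^ (ℓ - 1) := by
      have h9 : t + 1 ≤ p := by omega
      have h10 := Nat.mul_le_mul_right (p ^ (ℓ - 1)) h9
      have h11 : (t + 1) * p ^ (ℓ - 1) = t * p ^ (ℓ - 1) + p ^ (ℓ - 1) := by ring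
      omega
    calc t ^ a + p ^ b ≤ t * p ^ (ℓ - 1) + p ^ (ℓ - 1) := by
          rw [e4]
          have := Nat.mul_le_mul_left t e8
          omega
      _ ≤ p * p ^ (ℓ - 1) := e6
      _ = p ^ ℓ := e7
  -- Step D : integer congruence
  have hNdvd : ((p : ℤ) ^ ℓ * t + 1) ∣ (p : ℤ) ^ K + 1 := by
    refine ⟨(m' : ℤ), ?_⟩
    have hc : ((m' * (p ^ ℓ * t + 1) : ℕ) : ℤ) = ((p ^ K + 1 : ℕ) : ℤ) := by
      exact_mod_cast congrArg (Nat.cast : ℕ → ℤ) hm'N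
    push_cast at hc
    linarith
  have hdvd2 : ((p : ℤ) ^ ℓ * t + 1) ∣ ((p : ℤ) ^ ℓ * t) ^ a - (-1) ^ a := by
    have := sub_dvd_pow_sub_pow ((p : ℤ) ^ ℓ * t) (-1) a
    simpa [sub_neg_eq_add] using this
  have key : ((p : ℤ) ^ ℓ * t + 1) ∣ (t : ℤ) ^ a + (-1) ^ a * (p : ℤ) ^ b := by
    have h1 := dvd_sub (hNdvd.mul_left ((t : ℤ) ^ a)) (hdvd2.mul_left ((p : ℤ) ^ b))
    have h2 : (t : ℤ) ^ a * ((p : ℤ) ^ K + 1) -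
        (p : ℤ) ^ b * (((p : ℤ) ^ ℓ * t) ^ a - (-1) ^ a)
        = (t : ℤ) ^ a + (-1) ^ a * (p : ℤ) ^ b := by
      rw [show K = ℓ * a + b by omega, pow_add, pow_mul]
      ring
    rwa [h2] at h1
  have hb1 : ((t : ℤ)) ^ a + (p : ℤ) ^ b ≤ (p : ℤ) ^ ℓ := by exact_mod_cast hbound
  have htz : (1 : ℤ) ≤ (t : ℤ) := by exact_mod_cast ht1
  have hpz : (0 : ℤ) < (p : ℤ) := by exact_mod_cast (by omega : 0 < p)
  have hplz : (0 : ℤ) < (p : ℤ) ^ ℓ := pow_pos hpz ℓ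
  have hNbig : (p : ℤ) ^ ℓ < (p : ℤ) ^ ℓ * t + 1 := by nlinarith
  rcases Nat.even_or_odd a with hae | hao
  · -- a even : contradiction
    rw [Even.neg_one_pow hae, one_mul] at key
    have hpos : (0 : ℤ) < (t : ℤ) ^ a + (p : ℤ) ^ b := by positivity
    have hle := Int.le_of_dvd hpos key
    linarith
  · -- a odd
    rw [Odd.neg_one_pow hao] at key
    have key' : ((p : ℤ) ^ ℓ * t + 1) ∣ (t : ℤ) ^ a - (p : ℤ) ^ b := by
      have h2 : (t : ℤ) ^ a + -1 * (p : ℤ) ^ b = (t : ℤ) ^ a - (p : ℤ) ^ b := by ring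
      rwa [h2] at key
    have htaz : (0 : ℤ) ≤ (t : ℤ) ^ a := by positivity
    have hpbz : (0 : ℤ) ≤ (p : ℤ) ^ b := by positivity
    have heq0 : (t : ℤ) ^ a - (p : ℤ) ^ b = 0 := by
      apply Int.eq_zero_of_abs_lt_dvd key'
      rw [abs_lt]
      constructor <;> linarith
    have htpn : t ^ a = p ^ b := by
      have : (t : ℤ) ^ a = (p : ℤ) ^ b := by linarith
      exact_mod_cast this
    have hb0 : b = 0 := by
      by_contra hb0
      have hpdvd : p ∣ t ^ a := htpn ▸ dvd_pow_self p hb0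
      have h1 := hp.dvd_of_dvd_pow hpdvd
      have h2 := Nat.le_of_dvd (by omega) h1
      omega
    have ht1' : t = 1 := by
      rw [hb0, pow_zero] at htpn
      by_contra hne1
      have h1 : t ≤ t ^ a := Nat.le_self_pow (by omega) t
      omega
    subst ht1'
    rw [one_mul] at hm hm1
    rw [mul_one] at hm'N
    -- now : hm'N : m' * (p ^ ℓ + 1) = p ^ K + 1, K = ℓ * a, a odd, m' > 1
    have hKla : K = ℓ * a := by omega
    -- m' is odd
    have hm'odd : ¬ (2 ∣ m') := by
      intro h2d
      set x : ℤ := (p : ℤ) ^ ℓ with hxdef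
      have hgeom : (∑ i ∈ Finset.range a, (-x) ^ i) * (x + 1) = x ^ a + 1 := by
        have hg := geom_sum_mul (-x) a
        rw [Odd.neg_pow hao] at hg
        linear_combination -hg
      have hm'x : (m' : ℤ) * (x + 1) = x ^ a + 1 := by
        have hc : ((m' * (p ^ ℓ + 1) : ℕ) : ℤ) = ((p ^ K + 1 : ℕ) : ℤ) := by
          exact_mod_cast congrArg (Nat.cast : ℕ → ℤ) hm'N
        push_cast at hc
        rw [hxdef]
        rw [hKla, pow_mul] at hc
        linarith
      have hx1 : x + 1 ≠ 0 := by positivity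
      have hm'S : (m' : ℤ) = ∑ i ∈ Finset.range a, (-x) ^ i :=
        mul_right_cancel₀ hx1 (hm'x.trans hgeom.symm)
      have hp2' : ((p : ℕ) : ZMod 2) = 1 := by
        rw [← ZMod.natCast_mod p 2, Nat.odd_iff.mp hodd]
        norm_num
      have hx2 : ((-x : ℤ) : ZMod 2) = 1 := by
        rw [hxdef]
        push_cast
        rw [hp2']
        rw [one_pow]
        decide
      have hS2 : (((∑ i ∈ Finset.range a, (-x) ^ i : ℤ)) : ZMod 2) = 1 := by
        have h1 : (((∑ i ∈ Finset.range a, (-x) ^ i : ℤ)) : ZMod 2)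
            = ∑ i ∈ Finset.range a, (((-x : ℤ) : ZMod 2)) ^ i := by
          push_cast
          rfl
        rw [h1]
        simp only [hx2, one_pow, Finset.sum_const, Finset.card_range, nsmul_eq_mul, mul_one]
        rw [← ZMod.natCast_mod a 2, Nat.odd_iff.mp hao]
        norm_num
      have hz : ((m' : ℤ) : ZMod 2) = 0 := by
        have h0 : ((m' : ℕ) : ZMod 2) = 0 := (ZMod.natCast_eq_zero_iff m' 2).mpr h2d
        push_cast
        exact h0
      rw [hm'S, hS2] at hz
      exact absurd hz (by decide)
    -- min fac
    obtain ⟨q, hq, hqm⟩ : ∃ q, q.Prime ∧ q ∣ m' :=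
      ⟨m'.minFac, Nat.minFac_prime (by omega), Nat.minFac_dvd m'⟩
    have hq2 : q ≠ 2 := by
      rintro hq2
      exact hm'odd (hq2 ▸ hqm)
    have hq3 : 3 ≤ q := by
      have := hq.two_le
      omega
    have hqK : q ∣ p ^ K + 1 := hqm.trans ⟨p ^ ℓ + 1, hm'N.symm⟩
    have hqM := hqm.trans hm
    rcases (Nat.Prime.dvd_mul hq).mp hqM with hqk | hqp1
    · -- q ∣ p^k + 1 : order argument
      haveI : Fact q.Prime := ⟨hq⟩
      haveI : Fact (2 < q) := ⟨by omega⟩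
      set e := orderOf (p : ZMod q) with hedef
      have hcast : ∀ n : ℕ, q ∣ p ^ n + 1 → (p : ZMod q) ^ n = -1 := by
        intro n hn
        have h0 : ((p ^ n + 1 : ℕ) : ZMod q) = 0 := (ZMod.natCast_eq_zero_iff _ _).mpr hn
        push_cast at h0
        linear_combination h0
      have hc1 := hcast k hqk
      have hc2 := hcast K hqK
      have hne : (-1 : ZMod q) ≠ 1 := ZMod.neg_one_ne_one
      have hdvd2k : ∀ n : ℕ, (p : ZMod q) ^ n = -1 → (e ∣ 2 * n ∧ ¬ e ∣ n) := by
        intro n hn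
        constructor
        · apply orderOf_dvd_of_pow_eq_one
          rw [mul_comm, pow_mul, hn]
          norm_num
        · intro hd
          have h1 : (p : ZMod q) ^ n = 1 := orderOf_dvd_iff_pow_eq_one.mp hd
          rw [hn] at h1
          exact hne h1
      obtain ⟨he1, he2⟩ := hdvd2k k hc1
      obtain ⟨he3, he4⟩ := hdvd2k K hc2
      have hv1 := aux_val2 e k (by omega) he1 he2
      have hv2 := aux_val2 e K (by omega) he3 he4
      haveI : Fact (Nat.Prime 2) := ⟨Nat.prime_two⟩
      obtain ⟨u, hu⟩ := hdvd
      have hu0 : u ≠ 0 := by rintro rfl; omega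
      have hku : k / ℓ = u := by rw [hu]; exact Nat.mul_div_cancel_left u (by omega)
      obtain ⟨u', huu'⟩ := (even_iff_two_dvd.mp (hku ▸ heven))
      have hu'0 : u' ≠ 0 := by omega
      have hvk : padicValNat 2 k = padicValNat 2 ℓ + padicValNat 2 u := by
        rw [hu]; exact padicValNat.mul (by omega) hu0
      have hvu : 1 ≤ padicValNat 2 u := by
        rw [show u = 2 * u' by omega, padicValNat.mul (by norm_num) hu'0,
          padicValNat.self (by norm_num)]
        omega
      have haodd2 : ¬ 2 ∣ a := by
        intro hda
        rw [Nat.odd_iff] at hao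
        omega
      have hvK : padicValNat 2 K = padicValNat 2 ℓ := by
        rw [hKla, padicValNat.mul (by omega) (by omega),
          padicValNat.eq_zero_of_not_dvd haodd2]
        omega
      omega
    · -- q ∣ p - 1
      have d1 : q ∣ p ^ K - 1 := by
        have := Nat.sub_dvd_pow_sub_pow p 1 K
        rw [one_pow] at this
        exact hqp1.trans this
      have d2 := Nat.dvd_sub hqK d1
      have hpK1 : 1 ≤ p ^ K := Nat.one_le_pow _ _ (by omega)
      rw [show (p ^ K + 1) - (p ^ K - 1) = 2 by omega] at d2
      have := Nat.le_of_dvd (by norm_num) d2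
      omega
end

section
/- Let p be an odd prime and let k, r be integers with 0 < r < k. If gcd(p^(k−r) + 1, p^k + 1) > 2, then the 2-adic valuation of r is strictly greater than the 2-adic valuation of k, i.e. ν₂(r) > ν₂(k). -/
theorem stmt_14 (p k r : ℕ) (hp : p.Prime) (hodd : Odd p)
    (hr : 0 < r) (hrk : r < k)
    (hgcd : 2 < Nat.gcd (p ^ (k - r) + 1) (p ^ k + 1)) :
    padicValNat 2 k < padicValNat 2 r := by
  haveI : Fact (Nat.Prime 2) := ⟨Nat.prime_two⟩
  set q := Nat.gcd (p ^ (k - r) + 1) (p ^ k + 1) with hq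
  haveI : Fact (2 < q) := ⟨hgcd⟩
  haveI : NeZero q := ⟨by omega⟩
  have hd1 : q ∣ p ^ (k - r) + 1 := Nat.gcd_dvd_left _ _
  have hd2 : q ∣ p ^ k + 1 := Nat.gcd_dvd_right _ _
  have hx1 : (p : ZMod q) ^ (k - r) = -1 := by
    have := (ZMod.natCast_eq_zero_iff _ q).mpr hd1
    push_cast at this
    linear_combination this
  have hx2 : (p : ZMod q) ^ k = -1 := by
    have := (ZMod.natCast_eq_zero_iff _ q).mpr hd2
    push_cast at this
    linear_combination this
  have hsplit : (p : ZMod q) ^ k = (p : ZMod q) ^ (k - r) * (p : ZMod q) ^ r := by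
    rw [← pow_add, Nat.sub_add_cancel hrk.le]
  have hxr : (p : ZMod q) ^ r = 1 := by
    have h := hsplit
    rw [hx1, hx2] at h
    linear_combination h
  set e := orderOf (p : ZMod q) with he
  have her : e ∣ r := orderOf_dvd_of_pow_eq_one hxr
  have he2k : e ∣ 2 * k := by
    apply orderOf_dvd_of_pow_eq_one
    rw [mul_comm, pow_mul, hx2]
    ring
  have hek : ¬ e ∣ k := by
    intro h
    have := orderOf_dvd_iff_pow_eq_one.mp h
    rw [hx2] at this
    exact ZMod.neg_one_ne_one this
  have he0 : e ≠ 0 := by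
    intro h0
    rw [h0, zero_dvd_iff] at he2k
    omega
  have hk0 : k ≠ 0 := by omega
  -- get m with 2*k = e*m and m odd
  obtain ⟨m, hm⟩ := he2k
  have hm0 : m ≠ 0 := by
    rintro rfl
    omega
  have hmodd : ¬ 2 ∣ m := by
    rintro ⟨m', rfl⟩
    apply hek
    refine ⟨m', ?_⟩
    have h2 : 2 * k = 2 * (e * m') := by rw [hm]; ring
    omega
  have hval : padicValNat 2 (2 * k) = padicValNat 2 e + padicValNat 2 m := by
    rw [hm, padicValNat.mul he0 hm0]
  rw [padicValNat.mul two_ne_zero hk0, padicValNat.self (by norm_num),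
    padicValNat.eq_zero_of_not_dvd hmodd] at hval
  obtain ⟨s, hs⟩ := her
  have hs0 : s ≠ 0 := by
    rintro rfl
    omega
  have : padicValNat 2 r = padicValNat 2 e + padicValNat 2 s := by
    rw [hs, padicValNat.mul he0 hs0]
  omega
end

section
/- Let p be an odd prime, let a ≥ 2 be an integer, and set k = 2^a. Let ℓ, r, t, m be natural numbers with 1 < ℓ < k, 0 < r < k, t dividing p − 1, m dividing (p^k + 1)(p − 1), and m > 1. Then m·(p^ℓ·t + 1) ≠ t·(p^(k−r) + 1). -/
/-- For odd `p` and odd exponent, `p^(2n+1)+1 = (p+1)*Q` with `Q` odd. -/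
lemma stmt16_odd_cofactor (p : ℤ) (hp : Odd p) :
    ∀ n : ℕ, ∃ Q : ℤ, Odd Q ∧ p ^ (2 * n + 1) + 1 = (p + 1) * Q := by
  intro n
  induction n with
  | zero => exact ⟨1, odd_one, by ring⟩
  | succ n ih =>
    obtain ⟨Q, hQ, hEq⟩ := ih
    refine ⟨p ^ 2 * Q - (p - 1), ?_, ?_⟩
    · have h1 : Odd (p ^ 2 * Q) := (hp.pow).mul hQ
      have h2 : Even (p - 1) := by
        obtain ⟨j, hj⟩ := hp
        exact ⟨j, by omega⟩
      exact h1.sub_even h2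
    · have h : p ^ (2 * (n + 1) + 1) + 1 = p ^ 2 * (p ^ (2 * n + 1) + 1) - (p ^ 2 - 1) := by
        ring
      rw [h, hEq]; ring

theorem stmt_16 (p a k ℓ r t m : ℕ) (hp : p.Prime) (hodd : Odd p)
    (ha : 2 ≤ a) (hk : k = 2 ^ a)
    (hℓ : 1 < ℓ) (hℓk : ℓ < k) (hr : 0 < r) (hrk : r < k)
    (ht : t ∣ p - 1) (hm : m ∣ (p ^ k + 1) * (p - 1)) (hm1 : 1 < m) :
    m * (p ^ ℓ * t + 1) ≠ t * (p ^ (k - r) + 1) := by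
  intro E
  have hp3 : 3 ≤ p := by
    have h2 := hp.two_le
    obtain ⟨j, hj⟩ := hodd
    omega
  have hppos : 0 < p := by omega
  have htpos : 0 < t := Nat.pos_of_dvd_of_pos ht (by omega)
  have hkrpos : 0 < k - r := by omega
  -- t ∣ m
  have htm : t ∣ m := by
    have h1 : t ∣ m * (p ^ ℓ * t + 1) := E ▸ dvd_mul_right t _
    have h2 : t ∣ m * (p ^ ℓ * t) := Dvd.dvd.mul_left (dvd_mul_left t _) m
    have h3 := Nat.dvd_sub h1 h2
    have h4 : m * (p ^ ℓ * t + 1) - m * (p ^ ℓ * t) = m := by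
      rw [Nat.mul_add, mul_one, Nat.add_sub_cancel_left]
    rwa [h4] at h3
  obtain ⟨s, hs⟩ := htm
  have hE2 : s * (p ^ ℓ * t + 1) = p ^ (k - r) + 1 := by
    refine Nat.eq_of_mul_eq_mul_left htpos ?_
    rw [← mul_assoc, ← hs, E]
  -- s divides p^(k-r)+1
  have hsdvd : s ∣ p ^ (k - r) + 1 := ⟨p ^ ℓ * t + 1, hE2.symm⟩
  -- s > 1
  have hs1 : 1 < s := by
    rcases Nat.lt_or_ge s 2 with h | h
    · interval_cases s
      · simp at hE2
      · -- s = 1 : then m = t and p^ℓ t = p^(k-r)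
        rw [mul_one] at hs
        have ht1 : 1 < t := hs ▸ hm1
        have hpe : p ^ ℓ * t = p ^ (k - r) := by omega
        obtain ⟨d, hd, hdt⟩ := Nat.exists_prime_and_dvd (by omega : t ≠ 1)
        have hdp : d ∣ p ^ (k - r) := hpe ▸ Dvd.dvd.mul_left hdt _
        have hdp' : d ∣ p := hd.dvd_of_dvd_pow hdp
        have : d = p := (Nat.prime_dvd_prime_iff_eq hd hp).mp hdp'
        have : p ≤ p - 1 := Nat.le_of_dvd (by omega) ((this ▸ hdt).trans ht)
        omega
    · exact h
  -- Case A : k - r ≤ ℓ gives size contradiction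
  rcases Nat.lt_or_ge ℓ (k - r) with hcase | hcase
  swap
  · have hle : p ^ (k - r) ≤ p ^ ℓ := Nat.pow_le_pow_right hppos hcase
    have h1 : p ^ ℓ ≤ p ^ ℓ * t := Nat.le_mul_of_pos_right _ htpos
    have h2 : 2 * (p ^ ℓ * t + 1) ≤ s * (p ^ ℓ * t + 1) :=
      Nat.mul_le_mul_right _ hs1
    omega
  -- Case B : ℓ < k - r, so k - r ≥ 3
  have hkr3 : 3 ≤ k - r := by omega
  -- p^2 ∣ s - 1, hence s ≥ p^2 + 1
  have hp2 : p ^ 2 ∣ s - 1 := by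
    have hz : ((s : ℤ) - 1) = (p : ℤ) ^ (k - r) - (s : ℤ) * ((p : ℤ) ^ ℓ * t) := by
      have hc := congrArg (Nat.cast : ℕ → ℤ) hE2
      push_cast at hc
      linarith [hc]
    have d1 : (p : ℤ) ^ 2 ∣ (p : ℤ) ^ (k - r) := pow_dvd_pow _ (by omega)
    have d2 : (p : ℤ) ^ 2 ∣ (s : ℤ) * ((p : ℤ) ^ ℓ * t) := by
      exact Dvd.dvd.mul_left (Dvd.dvd.mul_right (pow_dvd_pow _ (by omega)) _) _
    have d3 : (p : ℤ) ^ 2 ∣ (s : ℤ) - 1 := hz ▸ dvd_sub d1 d2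
    have hcast : ((s - 1 : ℕ) : ℤ) = (s : ℤ) - 1 := by
      have : 1 ≤ s := by omega
      push_cast [this]; ring
    have : ((p ^ 2 : ℕ) : ℤ) ∣ ((s - 1 : ℕ) : ℤ) := by
      rw [hcast]; push_cast; exact d3
    exact_mod_cast this
  have hsp2 : p ^ 2 + 1 ≤ s := by
    have := Nat.le_of_dvd (by omega) hp2
    omega
  -- every prime divisor of s is 2
  have hprime2 : ∀ d : ℕ, d.Prime → d ∣ s → d = 2 := by
    intro d hd hds
    have hdm : d ∣ (p ^ k + 1) * (p - 1) := (hds.trans (hs ▸ dvd_mul_left s t)).trans hm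
    have hdkr : d ∣ p ^ (k - r) + 1 := hds.trans hsdvd
    have h1pkr : 1 ≤ p ^ (k - r) := Nat.one_le_pow _ _ hppos
    rcases (Nat.Prime.dvd_mul hd).mp hdm with h | h
    · -- d ∣ p^k + 1
      by_contra hne
      -- d ∣ p^r - 1
      have h1 : d ∣ p ^ r * (p ^ (k - r) + 1) := Dvd.dvd.mul_left hdkr _
      have h2 : p ^ r * (p ^ (k - r) + 1) = p ^ k + p ^ r := by
        rw [mul_add, mul_one, ← pow_add]
        congr 2
        omega
      rw [h2] at h1
      have h3 : d ∣ p ^ r - 1 := by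
        have h4 := Nat.dvd_sub h1 h
        have h1pr : 1 ≤ p ^ r := Nat.one_le_pow _ _ hppos
        have h5 : p ^ k + p ^ r - (p ^ k + 1) = p ^ r - 1 := by omega
        rwa [h5] at h4
      -- work in ZMod d
      set x : ZMod d := (p : ZMod d) with hx
      have hxr : x ^ r = 1 := by
        have hz : ((p ^ r - 1 : ℕ) : ZMod d) = 0 := (ZMod.natCast_eq_zero_iff _ _).mpr h3
        have h1pr : 1 ≤ p ^ r := Nat.one_le_pow _ _ hppos
        rw [Nat.cast_sub h1pr] at hz
        push_cast at hz
        rw [hx]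
        linear_combination hz
      have hxk : x ^ k = -1 := by
        have hz : ((p ^ k + 1 : ℕ) : ZMod d) = 0 := (ZMod.natCast_eq_zero_iff _ _).mpr h
        push_cast at hz
        rw [hx]
        linear_combination hz
      have h2k : x ^ (2 ^ (a + 1)) = 1 := by
        have hpow : (2 : ℕ) ^ (a + 1) = k * 2 := by rw [hk]; ring
        rw [hpow, pow_mul, hxk]
        ring
      have hod : orderOf x ∣ 2 ^ (a + 1) := orderOf_dvd_of_pow_eq_one h2k
      have hor : orderOf x ∣ r := orderOf_dvd_of_pow_eq_one hxr
      obtain ⟨c, hc, hcx⟩ := (Nat.dvd_prime_pow Nat.prime_two).mp hod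
      have hords : orderOf x ≤ r := Nat.le_of_dvd hr hor
      have hclt : c < a := by
        by_contra hge
        have h2a : 2 ^ a ≤ 2 ^ c := Nat.pow_le_pow_right (by norm_num) (by omega)
        have : r < 2 ^ a := hk ▸ hrk
        omega
      have hdk : orderOf x ∣ k := by
        rw [hcx, hk]
        exact pow_dvd_pow 2 hclt.le
      have hxone : x ^ k = 1 := orderOf_dvd_iff_pow_eq_one.mp hdk
      rw [hxk] at hxone
      have h2z : ((2 : ℕ) : ZMod d) = 0 := by
        push_cast
        linear_combination -hxone
      have hd2 : d ∣ 2 := (ZMod.natCast_eq_zero_iff _ _).mp h2z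
      exact hne ((Nat.prime_dvd_prime_iff_eq hd Nat.prime_two).mp hd2)
    · -- d ∣ p - 1
      have h1 : d ∣ p ^ (k - r) - 1 := by
        have := Nat.sub_dvd_pow_sub_pow p 1 (k - r)
        rw [one_pow] at this
        exact h.trans this
      have h2 := Nat.dvd_sub hdkr h1
      have h3 : p ^ (k - r) + 1 - (p ^ (k - r) - 1) = 2 := by omega
      rw [h3] at h2
      exact (Nat.prime_dvd_prime_iff_eq hd Nat.prime_two).mp h2
  -- s is a power of 2
  obtain ⟨b, hb⟩ : ∃ b, s = 2 ^ b :=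
    ⟨_, Nat.eq_prime_pow_of_unique_prime_dvd (by omega) fun {q} hq hqs => hprime2 q hq hqs⟩
  rcases Nat.even_or_odd (k - r) with he | ho
  · -- k - r even: p^(k-r) ≡ 1 mod 4 but 4 ∣ s ∣ p^(k-r)+1
    obtain ⟨e, he⟩ := he
    have hp2ge : 9 ≤ p ^ 2 := by nlinarith
    have hb2 : 2 ≤ b := by
      by_contra hlt
      interval_cases b <;> omega
    have h4s : 4 ∣ s := by
      rw [hb]
      calc (4 : ℕ) = 2 ^ 2 := by norm_num
        _ ∣ 2 ^ b := pow_dvd_pow 2 hb2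
    have h4 : 4 ∣ p ^ (k - r) + 1 := h4s.trans hsdvd
    have hpe : Odd (p ^ e) := hodd.pow
    obtain ⟨j, hj⟩ := hpe
    have hsq : p ^ (k - r) = (p ^ e) ^ 2 := by rw [he, ← pow_mul]; ring_nf
    have : p ^ (k - r) = 4 * (j * j + j) + 1 := by rw [hsq, hj]; ring
    omega
  · -- k - r odd
    obtain ⟨n', hn'⟩ := ho
    have hpodd : Odd (p : ℤ) := Int.odd_coe_nat p |>.mpr hodd
    obtain ⟨Q, hQodd, hQ⟩ := stmt16_odd_cofactor (p : ℤ) hpodd n'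
    rw [← hn'] at hQ
    -- Q is positive; move to ℕ
    have hQpos : 0 < Q := by
      by_contra hle
      push_neg at hle
      have h1 : ((p : ℤ) + 1) * Q ≤ 0 :=
        mul_nonpos_of_nonneg_of_nonpos (by positivity) hle
      have h2 : 0 < (p : ℤ) ^ (k - r) + 1 := by positivity
      omega
    set Qn : ℕ := Q.toNat with hQn
    have hQcast : (Qn : ℤ) = Q := Int.toNat_of_nonneg hQpos.le
    have hNat : p ^ (k - r) + 1 = (p + 1) * Qn := by
      have : ((p ^ (k - r) + 1 : ℕ) : ℤ) = (((p + 1) * Qn : ℕ) : ℤ) := by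
        push_cast
        rw [hQcast]
        exact hQ
      exact_mod_cast this
    have hQnodd : Odd Qn := by
      rw [← Int.odd_coe_nat, hQcast]
      exact hQodd
    -- s = 2^b is coprime to Qn, so s ∣ p + 1
    have hcop : Nat.Coprime s Qn := by
      rw [hb]
      refine Nat.Coprime.pow_left b ?_
      rw [Nat.Prime.coprime_iff_not_dvd Nat.prime_two]
      obtain ⟨j, hj⟩ := hQnodd
      omega
    have hsp1 : s ∣ p + 1 := by
      refine hcop.dvd_of_dvd_mul_right ?_
      rw [← hNat]
      exact hsdvd
    have hle : s ≤ p + 1 := Nat.le_of_dvd (by omega) hsp1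
    have : p < p ^ 2 := by nlinarith
    omega
end

section
/- Let p be an odd prime and let k, ℓ, r, t, m be natural numbers with 1 < ℓ < k, ℓ dividing k with k/ℓ even, k < ℓ², 0 < r < k, t dividing p − 1, m dividing (p^k + 1)(p − 1), and m > 1. Then m·(p^ℓ·t + 1) ≠ t·(p^(k−r) + 1). -/
/-!
Put `d = k - r`. As `N = p ^ ℓ * t + 1` is coprime to `t`, the equation forces `N ∣ p ^ d + 1`.
Write `d = ℓ q + ρ` with `q, ρ < ℓ` (because `d < ℓ ^ 2`); multiplying `p ^ d ≡ -1` by `t ^ q`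
and using `p ^ ℓ t ≡ -1 (mod N)` gives `(-1) ^ q p ^ ρ ≡ -t ^ q (mod N)`. Both `p ^ ρ` and
`t ^ q` are below `N / 2`, so `q` is odd and `p ^ ρ = t ^ q`; since `t ∣ p - 1` is prime to `p`,
this means `t = 1` and `ρ = 0`. With `X = p ^ ℓ` the equation now reads `m (X + 1) = X ^ q + 1`,
so `q ≥ 3` (as `m > 1`) and `m > X`. But `q` is odd and `k / ℓ` is even, so
`gcd (X ^ q + 1, X ^ (k / ℓ) + 1) ∣ 2`, and then `m ∣ (p ^ k + 1)(p - 1)` gives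
`m ≤ 2 (p - 1) < X`.
-/

theorem two_eq_zero_of_pow_eq_neg_one {R : Type*} [CommRing R] {y : R} {a b : ℕ}
    (ha : Odd a) (hb : Even b) (hya : y ^ a = -1) (hyb : y ^ b = -1) : (2 : R) = 0 := by
  have h : (-1 : R) ^ b = (-1) ^ a := calc
    (-1 : R) ^ b = (y ^ a) ^ b := by rw [hya]
    _ = (y ^ b) ^ a := by rw [← pow_mul, ← pow_mul, mul_comm]
    _ = (-1) ^ a := by rw [hyb]
  rw [hb.neg_one_pow, ha.neg_one_pow] at h
  linear_combination h

theorem Nat.dvd_two_of_dvd_pow_add_one {n y a b : ℕ} (ha : Odd a) (hb : Even b)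
    (hna : n ∣ y ^ a + 1) (hnb : n ∣ y ^ b + 1) : n ∣ 2 := by
  have hpow : ∀ {e}, n ∣ y ^ e + 1 → (y : ZMod n) ^ e = -1 := fun he => by
    have := (ZMod.natCast_eq_zero_iff _ n).2 he
    push_cast at this
    linear_combination this
  exact (ZMod.natCast_eq_zero_iff 2 n).1 <| by
    exact_mod_cast two_eq_zero_of_pow_eq_neg_one ha hb (hpow hna) (hpow hnb)

theorem Nat.dvd_two_mul_of_dvd_pow_add_one {m y a b n : ℕ} (ha : Odd a) (hb : Even b)
    (hma : m ∣ y ^ a + 1) (hmb : m ∣ (y ^ b + 1) * n) : m ∣ 2 * n := by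
  have hgcd : Nat.gcd m (y ^ b + 1) ∣ 2 :=
    Nat.dvd_two_of_dvd_pow_add_one ha hb ((Nat.gcd_dvd_left _ _).trans hma)
      (Nat.gcd_dvd_right _ _)
  calc m = Nat.gcd m ((y ^ b + 1) * n) := (Nat.gcd_eq_left hmb).symm
    _ ∣ Nat.gcd m (y ^ b + 1) * Nat.gcd m n := gcd_mul_dvd_mul_gcd m _ _
    _ ∣ 2 * n := mul_dvd_mul hgcd (Nat.gcd_dvd_right _ _)

theorem neg_one_pow_mul_pow_eq_neg_pow {R : Type*} [CommRing R] {x s : R} {ℓ q ρ : ℕ}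
    (hx : x ^ ℓ * s = -1) (hd : x ^ (ℓ * q + ρ) = -1) : (-1) ^ q * x ^ ρ = -s ^ q := by
  rw [← hx, mul_pow, ← pow_mul]
  rw [pow_add] at hd
  linear_combination s ^ q * hd

theorem Nat.odd_and_pow_eq_pow_of_dvd {p t ℓ q ρ : ℕ} (hp : 2 ≤ p) (ht : 0 < t)
    (htp : t ≤ p) (hq : q < ℓ) (hρ : ρ < ℓ)
    (h : p ^ ℓ * t + 1 ∣ p ^ (ℓ * q + ρ) + 1) :
    Odd q ∧ p ^ ρ = t ^ q := by
  set N := p ^ ℓ * t + 1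
  have hρN : p ^ ρ ≤ p ^ (ℓ - 1) := Nat.pow_le_pow_right (by omega) (by omega)
  have hqN : t ^ q ≤ p ^ (ℓ - 1) :=
    (Nat.pow_le_pow_left htp q).trans (Nat.pow_le_pow_right (by omega) (by omega))
  have hsum : p ^ ρ + t ^ q < N := by
    have : 2 * p ^ (ℓ - 1) ≤ p ^ ℓ * t := calc
      2 * p ^ (ℓ - 1) ≤ p * p ^ (ℓ - 1) := Nat.mul_le_mul_right _ hp
      _ = p ^ ℓ := by rw [← pow_succ']; congr 1; omega
      _ ≤ p ^ ℓ * t := Nat.le_mul_of_pos_right _ ht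
    omega
  have hcong : (-1 : ZMod N) ^ q * (p : ZMod N) ^ ρ = -(t : ZMod N) ^ q := by
    refine neg_one_pow_mul_pow_eq_neg_pow (ℓ := ℓ) ?_ ?_
    · have := ZMod.natCast_self N
      push_cast [N] at this
      linear_combination this
    · have := (ZMod.natCast_eq_zero_iff _ N).2 h
      push_cast at this
      linear_combination this
  rcases Nat.even_or_odd q with hq | hq
  · rw [hq.neg_one_pow, one_mul] at hcong
    have hdvd : N ∣ p ^ ρ + t ^ q := (ZMod.natCast_eq_zero_iff _ N).1 <| by
      push_cast
      linear_combination hcong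
    exact absurd (Nat.le_of_dvd (by positivity) hdvd) (by omega)
  · refine ⟨hq, Nat.ModEq.eq_of_lt_of_lt ((ZMod.natCast_eq_natCast_iff _ _ N).1 ?_)
      (by omega) (by omega)⟩
    rw [hq.neg_one_pow] at hcong
    push_cast
    linear_combination -hcong

theorem Nat.eq_one_of_pow_eq_pow_of_dvd_sub_one {p t q ρ : ℕ} (hp : 1 < p) (ht : t ∣ p - 1)
    (hq : q ≠ 0) (h : p ^ ρ = t ^ q) : t = 1 ∧ ρ = 0 := by
  have htp : Nat.Coprime t p :=
    Nat.Coprime.coprime_dvd_left ht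
      ((Nat.coprime_self_sub_left hp.le).2 (Nat.coprime_one_left p))
  have hcop := htp.symm.pow ρ q
  rw [← h] at hcop
  have h1 : p ^ ρ = 1 := (Nat.coprime_self _).1 hcop
  exact ⟨(Nat.pow_eq_one.1 (h ▸ h1)).resolve_right hq,
    (Nat.pow_eq_one.1 h1).resolve_left hp.ne'⟩

theorem Nat.eq_one_and_exists_odd_of_dvd {p t ℓ d : ℕ} (hp : 2 ≤ p) (ht : t ∣ p - 1)
    (hd : d < ℓ ^ 2) (h : p ^ ℓ * t + 1 ∣ p ^ d + 1) :
    t = 1 ∧ ∃ q < ℓ, Odd q ∧ d = ℓ * q := by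
  have hℓ : 0 < ℓ := Nat.pos_of_ne_zero (by rintro rfl; simp at hd)
  have hq : d / ℓ < ℓ := Nat.div_lt_of_lt_mul (by rwa [sq] at hd)
  rw [← Nat.div_add_mod d ℓ] at h
  obtain ⟨hodd, hpow⟩ := Nat.odd_and_pow_eq_pow_of_dvd hp (Nat.pos_of_dvd_of_pos ht (by omega))
    ((Nat.le_of_dvd (by omega) ht).trans (Nat.sub_le p 1)) hq (Nat.mod_lt d hℓ) h
  obtain ⟨rfl, hρ⟩ := Nat.eq_one_of_pow_eq_pow_of_dvd_sub_one hp ht hodd.pos.ne' hpow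
  exact ⟨rfl, d / ℓ, hq, hodd, (Nat.mul_div_cancel' (Nat.dvd_of_mod_eq_zero hρ)).symm⟩

theorem Nat.lt_of_mul_add_one_eq_pow_add_one {m X q : ℕ} (hX : 2 ≤ X) (hq : 3 ≤ q)
    (h : m * (X + 1) = X ^ q + 1) : X < m := by
  by_contra! hm
  have h3 : X ^ 3 ≤ X ^ q := Nat.pow_le_pow_right (by omega) hq
  have hX3 : X * (X + 1) < X ^ 3 + 1 := by
    have : 2 * (X * X) ≤ X * (X * X) := Nat.mul_le_mul_right _ hX
    nlinarith
  nlinarith [Nat.mul_le_mul_right (X + 1) hm]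

theorem stmt_17_general (p k ℓ r t m : ℕ) (hp : p.Prime)
    (hdvd : ℓ ∣ k) (heven : Even (k / ℓ))
    (hkℓ : k < ℓ ^ 2)
    (ht : t ∣ p - 1) (hm : m ∣ (p ^ k + 1) * (p - 1)) (hm1 : 1 < m) :
    m * (p ^ ℓ * t + 1) ≠ t * (p ^ (k - r) + 1) := by
  intro heq
  have hp2 := hp.two_le
  have hN : p ^ ℓ * t + 1 ∣ p ^ (k - r) + 1 :=
    ((Nat.coprime_mul_right_add_left 1 t (p ^ ℓ)).2 (Nat.coprime_one_left t)).dvd_of_dvd_mul_left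
      (Dvd.intro_left m heq)
  obtain ⟨rfl, q, hqℓ, hq, hd⟩ :=
    Nat.eq_one_and_exists_odd_of_dvd hp2 ht (by omega : k - r < ℓ ^ 2) hN
  rw [mul_one, one_mul, hd, pow_mul] at heq
  have hq3 : 3 ≤ q := by
    obtain ⟨_ | j, rfl⟩ := hq
    · rw [mul_zero, zero_add, pow_one, Nat.mul_eq_right (Nat.succ_ne_zero _)] at heq
      omega
    · omega
  obtain ⟨c, rfl⟩ := hdvd
  have hc : Even c := by rwa [Nat.mul_div_cancel_left c (by omega)] at heven
  have hpℓ : 2 * (p - 1) < p ^ ℓ := calc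
    2 * (p - 1) < 2 * p := by omega
    _ ≤ p * p := Nat.mul_le_mul_right p hp2
    _ = p ^ 2 := (sq p).symm
    _ ≤ p ^ ℓ := Nat.pow_le_pow_right hp.pos (by omega)
  have hmℓ : p ^ ℓ < m := Nat.lt_of_mul_add_one_eq_pow_add_one (by omega) hq3 heq
  have hm2 : m ∣ 2 * (p - 1) :=
    Nat.dvd_two_mul_of_dvd_pow_add_one hq hc (Dvd.intro _ heq) (by rwa [pow_mul] at hm)
  have := Nat.le_of_dvd (by omega) hm2
  omega

theorem stmt_17 (p k ℓ r t m : ℕ) (hp : p.Prime) (hodd : Odd p)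
    (hℓ : 1 < ℓ) (hℓk : ℓ < k) (hdvd : ℓ ∣ k) (heven : Even (k / ℓ))
    (hkℓ : k < ℓ ^ 2) (hr : 0 < r) (hrk : r < k)
    (ht : t ∣ p - 1) (hm : m ∣ (p ^ k + 1) * (p - 1)) (hm1 : 1 < m) :
    m * (p ^ ℓ * t + 1) ≠ t * (p ^ (k - r) + 1) :=
  stmt_17_general p k ℓ r t m hp hdvd heven hkℓ ht hm hm1
end
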